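/- arXiv:2402.09969 — 3 statements merged into one kernel-verified Lean document; each statement's English description precedes it below -/
import Mathlib

section
/- In the Heisenberg group H with generating set S = {x,y}, where x is the unitriangular matrix with (1,2)-entry 1 and y the one with (2,3)-entry 1, the element x lies in the kernel of the natural action of H on every asymptotic cone: for every nonprincipal ultrafilter ω on ℕ, every unbounded nondecreasing sequence (d_n) of positive real numbers, and every sequence (g_n) in H with (‖g_n‖_S/d_n) bounded, the sequence ‖g_n⁻¹ x g_n‖_S / d_n converges to 0 along ω. Since the conjugacy class of x is infinite, this shows FC(H) ⊊ ker(H ↷ Cone_ω(H,d_n)). -/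
open Matrix Filter

abbrev M3 : Type := Matrix (Fin 3) (Fin 3) ℤ

def Heisenberg : Subgroup M3ˣ where
  carrier := {u | ∃ a b c : ℤ, (u : M3) = !![1, a, c; 0, 1, b; 0, 0, 1]}
  one_mem' := ⟨0, 0, 0, by rw [Units.val_one]; exact Matrix.one_fin_three⟩
  mul_mem' := by
    rintro u v ⟨a, b, c, hu⟩ ⟨a', b', c', hv⟩
    refine ⟨a + a', b + b', c + c' + a * b', ?_⟩
    show (u : M3) * v = _
    rw [hu, hv, Matrix.mul_fin_three]
    norm_num
    ring_nf
    exact ⟨⟨trivial, trivial⟩, trivial⟩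
  inv_mem' := by
    rintro u ⟨a, b, c, hu⟩
    refine ⟨-a, -b, a * b - c, ?_⟩
    have h : (u : M3) * !![1, -a, a * b - c; 0, 1, -b; 0, 0, 1] = 1 := by
      rw [hu, Matrix.mul_fin_three, Matrix.one_fin_three]
      norm_num
      ring_nf
    exact Units.inv_eq_of_mul_eq_one_right h

def xu : M3ˣ where
  val := !![1, 1, 0; 0, 1, 0; 0, 0, 1]
  inv := !![1, -1, 0; 0, 1, 0; 0, 0, 1]
  val_inv := by rw [Matrix.mul_fin_three, Matrix.one_fin_three]; norm_num
  inv_val := by rw [Matrix.mul_fin_three, Matrix.one_fin_three]; norm_num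

def yu : M3ˣ where
  val := !![1, 0, 0; 0, 1, 1; 0, 0, 1]
  inv := !![1, 0, 0; 0, 1, -1; 0, 0, 1]
  val_inv := by rw [Matrix.mul_fin_three, Matrix.one_fin_three]; norm_num
  inv_val := by rw [Matrix.mul_fin_three, Matrix.one_fin_three]; norm_num

/-- The generator `x`: unitriangular matrix with (1,2)-entry 1. -/
def x : Heisenberg := ⟨xu, 1, 0, 0, rfl⟩

/-- The generator `y`: unitriangular matrix with (2,3)-entry 1. -/
def y : Heisenberg := ⟨yu, 0, 1, 0, rfl⟩

/-- The word length of `g` with respect to a generating set `S`. -/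
noncomputable def wordLength {G : Type*} [Group G] (S : Set G) (g : G) : ℕ :=
  sInf {n | ∃ l : List G, (∀ x ∈ l, x ∈ S ∨ x⁻¹ ∈ S) ∧ l.length = n ∧ l.prod = g}

/-- `g` lies in the kernel of the natural action of `G` on the asymptotic cone
`Cone_ω(G, d_n)`. -/
def inConeKernel {G : Type*} [Group G] (S : Set G) (ω : Ultrafilter ℕ) (d : ℕ → ℝ)
    (g : G) : Prop :=
  ∀ xseq : ℕ → G, (∃ B : ℝ, ∀ n, (wordLength S (xseq n) : ℝ) / d n ≤ B) →
    Tendsto (fun n => (wordLength S ((xseq n)⁻¹ * g * xseq n) : ℝ) / d n)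
      (ω : Filter ℕ) (nhds 0)

/-!
For `u ∈ H` with `y`-coordinate `b`, the conjugate `u⁻¹ x u` equals `x z ^ b`, where `z = ⁅x, y⁆`
is central and `|b| ≤ ‖u‖`. The centre is quadratically distorted: `z ^ (k ^ 2) = ⁅x ^ k, y ^ k⁆`,
so `‖z ^ t‖ = O(√|t|)` and hence `‖u⁻¹ x u‖ = O(1 + √‖u‖)`, which is `o(d_n)` along `ω` whenever
`‖u_n‖ = O(d_n)`. The same estimate with a constant bound covers every element with finite
conjugacy class, whereas the conjugates `x z ^ t` of `x` are pairwise distinct.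
-/

open scoped commutatorElement

section WordLength

variable {G : Type*} [Group G] {S : Set G}

lemma wordLength_list_prod_le {l : List G} (hl : ∀ s ∈ l, s ∈ S ∨ s⁻¹ ∈ S) :
    wordLength S l.prod ≤ l.length :=
  Nat.sInf_le ⟨l, hl, rfl, rfl⟩

lemma wordLength_le_one_of_mem {s : G} (hs : s ∈ S) : wordLength S s ≤ 1 := by
  simpa using wordLength_list_prod_le (S := S) (l := [s]) (by simp [hs])

lemma wordLength_pow_le_of_mem {s : G} (hs : s ∈ S) (n : ℕ) : wordLength S (s ^ n) ≤ n := by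
  simpa using wordLength_list_prod_le (S := S) (l := List.replicate n s)
    (fun t ht => .inl (List.eq_of_mem_replicate ht ▸ hs))

lemma exists_list_length_eq_wordLength (hS : Subgroup.closure S = ⊤) (g : G) :
    ∃ l : List G, (∀ s ∈ l, s ∈ S ∨ s⁻¹ ∈ S) ∧ l.length = wordLength S g ∧ l.prod = g := by
  have hg : g ∈ Submonoid.closure (S ∪ S⁻¹) := by
    rw [← Subgroup.closure_toSubmonoid, hS]
    trivial
  obtain ⟨l, hl, rfl⟩ := Submonoid.exists_list_of_mem_closure hg
  exact Nat.sInf_mem (s := {n | ∃ l' : List G, (∀ s ∈ l', s ∈ S ∨ s⁻¹ ∈ S) ∧ l'.length = n ∧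
    l'.prod = l.prod}) ⟨l.length, l, fun s hs => hl s hs, rfl, rfl⟩

lemma wordLength_mul_le (hS : Subgroup.closure S = ⊤) (g h : G) :
    wordLength S (g * h) ≤ wordLength S g + wordLength S h := by
  obtain ⟨l, hl, hlen, rfl⟩ := exists_list_length_eq_wordLength hS g
  obtain ⟨l', hl', hlen', rfl⟩ := exists_list_length_eq_wordLength hS h
  rw [← hlen, ← hlen', ← List.length_append, ← List.prod_append]
  exact wordLength_list_prod_le (List.forall_mem_append.2 ⟨hl, hl'⟩)

lemma wordLength_inv_le (hS : Subgroup.closure S = ⊤) (g : G) :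
    wordLength S g⁻¹ ≤ wordLength S g := by
  obtain ⟨l, hl, hlen, rfl⟩ := exists_list_length_eq_wordLength hS g
  rw [← hlen, List.prod_inv_reverse]
  refine (wordLength_list_prod_le fun s hs => ?_).trans (by simp)
  obtain ⟨t, ht, rfl⟩ := List.mem_map.1 (List.mem_reverse.1 hs)
  simpa [or_comm] using hl t ht

lemma wordLength_pow_le (hS : Subgroup.closure S = ⊤) (g : G) (n : ℕ) :
    wordLength S (g ^ n) ≤ n * wordLength S g := by
  induction n with
  | zero => simpa using wordLength_list_prod_le (S := S) (l := []) (by simp)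
  | succ n ih =>
    rw [pow_succ, add_one_mul]
    exact (wordLength_mul_le hS _ _).trans (by omega)

lemma wordLength_commutatorElement_le (hS : Subgroup.closure S = ⊤) (g h : G) :
    wordLength S ⁅g, h⁆ ≤ 2 * wordLength S g + 2 * wordLength S h := by
  have := wordLength_mul_le hS (g * h * g⁻¹) h⁻¹
  have := wordLength_mul_le hS (g * h) g⁻¹
  have := wordLength_mul_le hS g h
  have := wordLength_inv_le hS g
  have := wordLength_inv_le hS h
  rw [commutatorElement_def]
  omega

lemma abs_le_wordLength_of_map_mul (hS : Subgroup.closure S = ⊤) (f : G → ℤ)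
    (hf_mul : ∀ g h, f (g * h) = f g + f h) (hfS : ∀ s ∈ S, |f s| ≤ 1) (g : G) :
    |f g| ≤ wordLength S g := by
  have hf_one : f 1 = 0 := by
    have := hf_mul 1 1
    rw [mul_one] at this
    omega
  have hf_gen : ∀ s, s ∈ S ∨ s⁻¹ ∈ S → |f s| ≤ 1 := by
    rintro s (hs | hs)
    · exact hfS s hs
    · have : f s⁻¹ + f s = 0 := by rw [← hf_mul, inv_mul_cancel, hf_one]
      simpa [show f s = -f s⁻¹ by omega] using hfS _ hs
  obtain ⟨l, hl, hlen, rfl⟩ := exists_list_length_eq_wordLength hS g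
  rw [← hlen]
  clear hlen
  induction l with
  | nil => simp [hf_one]
  | cons s l ih =>
    rw [List.prod_cons, hf_mul, List.length_cons]
    have hs := hf_gen s (hl s List.mem_cons_self)
    have hl' := ih fun t ht => hl t (List.mem_cons_of_mem s ht)
    calc |f s + f l.prod| ≤ |f s| + |f l.prod| := abs_add_le _ _
      _ ≤ _ := by push_cast; linarith

end WordLength

lemma Ultrafilter.le_atTop_of_forall_mem_infinite (ω : Ultrafilter ℕ)
    (hω : ∀ A ∈ ω, A.Infinite) : (ω : Filter ℕ) ≤ atTop := by
  rw [← Nat.cofinite_eq_atTop]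
  rcases ω.le_cofinite_or_eq_pure with h | ⟨a, rfl⟩
  · exact h
  · exact absurd (Set.finite_singleton a) (hω {a} (by simp))

lemma tendsto_one_add_sqrt_mul_div_atTop (B : ℝ) :
    Tendsto (fun t : ℝ => (1 + √(B * t)) / t) atTop (nhds 0) := by
  have hlim : Tendsto (fun t : ℝ => t⁻¹ + √(B / t)) atTop (nhds 0) := by
    simpa using tendsto_inv_atTop_zero.add (tendsto_const_nhds.div_atTop tendsto_id).sqrt
  refine hlim.congr' ((eventually_gt_atTop 0).mono fun t ht => ?_)
  -- Also for `B < 0`, where `Real.sqrt` makes both sides `0`.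
  have hsq : √(B * t) / t = √(B / t) := by
    calc √(B * t) / t = √(B / t * t ^ 2) / t := by congr 2; field_simp
      _ = √(B / t) := by
        rw [Real.sqrt_mul' _ (sq_nonneg t), Real.sqrt_sq ht.le, mul_div_cancel_right₀ _ ht.ne']
  simp only [add_div, one_div, hsq]

section ConeKernel

variable {G : Type*} [Group G] {S : Set G} {ω : Ultrafilter ℕ} {d : ℕ → ℝ}

lemma inConeKernel_of_wordLength_conj_le (hd : ∀ n, 0 < d n)
    (hdω : Tendsto d ω atTop) {g : G} (C : ℝ)
    (hC : ∀ u : G, (wordLength S (u⁻¹ * g * u) : ℝ) ≤ C * (1 + √(wordLength S u))) :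
    inConeKernel S ω d g := by
  rintro u ⟨B, hB⟩
  have hC0 : 0 ≤ C :=
    nonneg_of_mul_nonneg_left ((Nat.cast_nonneg _).trans (hC 1)) (by positivity)
  have hu : ∀ n, (wordLength S (u n) : ℝ) ≤ B * d n := fun n => (div_le_iff₀ (hd n)).1 (hB n)
  have hbound : ∀ n, (wordLength S ((u n)⁻¹ * g * u n) : ℝ) / d n
      ≤ C * ((1 + √(B * d n)) / d n) := by
    intro n
    rw [← mul_div_assoc]
    gcongr
    · exact (hd n).le
    · exact (hC (u n)).trans (by gcongr; exact hu n)
  have hlim := ((tendsto_one_add_sqrt_mul_div_atTop B).comp hdω).const_mul C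
  rw [mul_zero] at hlim
  exact squeeze_zero (fun n => div_nonneg (Nat.cast_nonneg _) (hd n).le) hbound hlim

lemma inConeKernel_of_finite_conj (hd : ∀ n, 0 < d n) (hdω : Tendsto d ω atTop) {g : G}
    (hg : {w | ∃ u : G, u⁻¹ * g * u = w}.Finite) : inConeKernel S ω d g := by
  obtain ⟨M, hM⟩ := (hg.image fun w => (wordLength S w : ℝ)).bddAbove
  have hconj : ∀ u : G, (wordLength S (u⁻¹ * g * u) : ℝ) ≤ M := fun u => hM ⟨_, ⟨u, rfl⟩, rfl⟩
  refine inConeKernel_of_wordLength_conj_le hd hdω M fun u => ?_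
  exact le_mul_of_one_le_right ((Nat.cast_nonneg _).trans (hconj 1)) (by simp) |>.trans' (hconj u)

end ConeKernel

namespace Heisenberg

def unitriangular (a b c : ℤ) : M3 := !![1, a, c; 0, 1, b; 0, 0, 1]

lemma unitriangular_mul (a b c a' b' c' : ℤ) :
    unitriangular a b c * unitriangular a' b' c' =
      unitriangular (a + a') (b + b') (c + c' + a * b') := by
  simp only [unitriangular, Matrix.mul_fin_three]
  ring_nf

def mk (a b c : ℤ) : Heisenberg :=
  ⟨⟨unitriangular a b c, unitriangular (-a) (-b) (a * b - c),
    by rw [unitriangular_mul]; simp [unitriangular, Matrix.one_fin_three],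
    by rw [unitriangular_mul]; simp [unitriangular, Matrix.one_fin_three]⟩, a, b, c, rfl⟩

lemma mk_mul (a b c a' b' c' : ℤ) :
    mk a b c * mk a' b' c' = mk (a + a') (b + b') (c + c' + a * b') :=
  Subtype.ext (Units.ext (unitriangular_mul a b c a' b' c'))

lemma mk_zero_zero_zero : mk 0 0 0 = 1 :=
  Subtype.ext (Units.ext (by simp [mk, unitriangular, Matrix.one_fin_three]))

lemma mk_inv (a b c : ℤ) : (mk a b c)⁻¹ = mk (-a) (-b) (a * b - c) :=
  Subtype.ext (Units.ext rfl)

lemma x_eq_mk : x = mk 1 0 0 := rfl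

lemma y_eq_mk : y = mk 0 1 0 := rfl

def xCoord (g : Heisenberg) : ℤ := ((g : M3ˣ) : M3) 0 1

def yCoord (g : Heisenberg) : ℤ := ((g : M3ˣ) : M3) 1 2

def zCoord (g : Heisenberg) : ℤ := ((g : M3ˣ) : M3) 0 2

@[simp] lemma xCoord_mk (a b c : ℤ) : xCoord (mk a b c) = a := by simp [xCoord, mk, unitriangular]

@[simp] lemma yCoord_mk (a b c : ℤ) : yCoord (mk a b c) = b := by simp [yCoord, mk, unitriangular]

@[simp] lemma zCoord_mk (a b c : ℤ) : zCoord (mk a b c) = c := by simp [zCoord, mk, unitriangular]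

lemma mk_coords (g : Heisenberg) : mk (xCoord g) (yCoord g) (zCoord g) = g := by
  obtain ⟨a, b, c, hg⟩ := g.2
  obtain rfl : g = mk a b c := Subtype.ext (Units.ext hg)
  simp

lemma yCoord_mul (g h : Heisenberg) : yCoord (g * h) = yCoord g + yCoord h := by
  rw [← mk_coords g, ← mk_coords h, mk_mul]
  simp

lemma mk_zpow {a b : ℤ} (c : ℤ) (hab : a * b = 0) (n : ℤ) :
    mk a b c ^ n = mk (n * a) (n * b) (n * c) := by
  induction n using Int.induction_on with
  | zero => simp [mk_zero_zero_zero]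
  | succ n ih =>
    rw [_root_.zpow_add_one, ih, mk_mul]
    congr 1
    · ring
    · ring
    · linear_combination (n : ℤ) * hab
  | pred n ih =>
    rw [_root_.zpow_sub_one, ih, mk_inv, mk_mul]
    congr 1
    · ring
    · ring
    · linear_combination ((n : ℤ) + 1) * hab

lemma commutatorElement_x_zpow_y_zpow (a b : ℤ) : ⁅x ^ a, y ^ b⁆ = mk 0 0 (a * b) := by
  rw [commutatorElement_def, x_eq_mk, y_eq_mk, mk_zpow _ (by ring), mk_zpow _ (by ring)]
  simp only [mk_inv, mk_mul]
  congr 1 <;> ring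

lemma commutatorElement_x_y : ⁅x, y⁆ = mk 0 0 1 := by
  simpa using commutatorElement_x_zpow_y_zpow 1 1

lemma closure_x_y : Subgroup.closure {x, y} = ⊤ := by
  refine eq_top_iff.2 fun g _ => ?_
  have hx : x ∈ Subgroup.closure {x, y} := Subgroup.subset_closure (by simp)
  have hy : y ∈ Subgroup.closure {x, y} := Subgroup.subset_closure (by simp)
  have hz : ⁅x, y⁆ ∈ Subgroup.closure {x, y} := by
    rw [commutatorElement_def]
    exact mul_mem (mul_mem (mul_mem hx hy) (inv_mem hx)) (inv_mem hy)
  have hg : x ^ xCoord g * y ^ yCoord g * ⁅x, y⁆ ^ (zCoord g - xCoord g * yCoord g) = g := by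
    rw [commutatorElement_x_y, x_eq_mk, y_eq_mk, mk_zpow _ (by ring), mk_zpow _ (by ring),
      mk_zpow _ (by ring), mk_mul, mk_mul, ← mk_coords g]
    simp only [xCoord_mk, yCoord_mk, zCoord_mk]
    congr 1 <;> ring
  rw [← hg]
  exact mul_mem (mul_mem (zpow_mem hx _) (zpow_mem hy _)) (zpow_mem hz _)

lemma abs_yCoord_le_wordLength (g : Heisenberg) : |yCoord g| ≤ wordLength {x, y} g := by
  refine abs_le_wordLength_of_map_mul closure_x_y yCoord yCoord_mul ?_ g
  rintro s (rfl | rfl) <;> simp [x_eq_mk, y_eq_mk]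

lemma wordLength_mk_zero_zero_natCast_le (n : ℕ) :
    wordLength {x, y} (mk 0 0 n) ≤ 12 * Nat.sqrt n := by
  have hsq_le := Nat.sqrt_le n
  have hle_sq := Nat.sqrt_le_add n
  set k := Nat.sqrt n
  set r := n - k * k
  -- `n = k ^ 2 + r` with `r ≤ 2 k`: a square commutator plus `r` commutators of the generators.
  have hr : r ≤ 2 * k := by omega
  have hn : mk 0 0 n = ⁅x ^ k, y ^ k⁆ * ⁅x, y⁆ ^ r := by
    rw [← zpow_natCast, ← zpow_natCast, ← zpow_natCast, commutatorElement_x_zpow_y_zpow,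
      commutatorElement_x_y, mk_zpow _ (by ring), mk_mul]
    congr 1
    push_cast [r, hsq_le]
    ring
  have hxy : wordLength {x, y} ⁅x, y⁆ ≤ 4 := by
    have := wordLength_commutatorElement_le closure_x_y x y
    have := wordLength_le_one_of_mem (S := {x, y}) (s := x) (by simp)
    have := wordLength_le_one_of_mem (S := {x, y}) (s := y) (by simp)
    omega
  have hxyk : wordLength {x, y} ⁅x ^ k, y ^ k⁆ ≤ 4 * k := by
    have := wordLength_commutatorElement_le closure_x_y (x ^ k) (y ^ k)
    have := wordLength_pow_le_of_mem (S := {x, y}) (s := x) (by simp) k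
    have := wordLength_pow_le_of_mem (S := {x, y}) (s := y) (by simp) k
    omega
  calc wordLength {x, y} (mk 0 0 n)
      ≤ wordLength {x, y} ⁅x ^ k, y ^ k⁆ + wordLength {x, y} (⁅x, y⁆ ^ r) :=
        hn ▸ wordLength_mul_le closure_x_y _ _
    _ ≤ 4 * k + r * 4 :=
        add_le_add hxyk ((wordLength_pow_le closure_x_y _ r).trans (Nat.mul_le_mul_left r hxy))
    _ ≤ 12 * k := by omega

lemma wordLength_mk_zero_zero_le (t : ℤ) :
    wordLength {x, y} (mk 0 0 t) ≤ 12 * Nat.sqrt t.natAbs := by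
  rcases Int.natAbs_eq t with ht | ht
  · rw [ht]
    exact wordLength_mk_zero_zero_natCast_le _
  · have hinv : mk 0 0 t = (mk 0 0 t.natAbs)⁻¹ := by rw [mk_inv, ht]; simp
    rw [hinv]
    exact (wordLength_inv_le closure_x_y _).trans (wordLength_mk_zero_zero_natCast_le _)

lemma conj_x (u : Heisenberg) : u⁻¹ * x * u = x * mk 0 0 (yCoord u) := by
  rw [← mk_coords u, mk_inv, x_eq_mk]
  simp only [mk_mul, yCoord_mk]
  congr 1 <;> ring

lemma wordLength_conj_x_le (u : Heisenberg) :
    (wordLength {x, y} (u⁻¹ * x * u) : ℝ) ≤ 12 * (1 + √(wordLength {x, y} u)) := by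
  have hmk : (wordLength {x, y} (mk 0 0 (yCoord u)) : ℝ) ≤ 12 * √(wordLength {x, y} u) :=
    calc (wordLength {x, y} (mk 0 0 (yCoord u)) : ℝ)
        ≤ 12 * Nat.sqrt (yCoord u).natAbs := by exact_mod_cast wordLength_mk_zero_zero_le _
      _ ≤ 12 * √((yCoord u).natAbs : ℝ) := by gcongr; exact Real.nat_sqrt_le_real_sqrt
      _ ≤ 12 * √(wordLength {x, y} u) := by
        have := abs_yCoord_le_wordLength u
        rw [← Int.natCast_natAbs] at this
        gcongr
        exact_mod_cast this
  have hx : (wordLength {x, y} x : ℝ) ≤ 1 := by exact_mod_cast wordLength_le_one_of_mem (by simp)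
  rw [conj_x]
  calc (wordLength {x, y} (x * mk 0 0 (yCoord u)) : ℝ)
      ≤ wordLength {x, y} x + wordLength {x, y} (mk 0 0 (yCoord u)) := by
        exact_mod_cast wordLength_mul_le closure_x_y _ _
    _ ≤ 12 * (1 + √(wordLength {x, y} u)) := by linarith

lemma infinite_conj_x : {w : Heisenberg | ∃ u : Heisenberg, u⁻¹ * x * u = w}.Infinite := by
  refine Set.infinite_of_injective_forall_mem (f := fun t : ℤ => x * mk 0 0 t) (fun t t' h => ?_)
    fun t => ⟨mk 0 t 0, by rw [conj_x, yCoord_mk]⟩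
  simpa using congrArg zCoord (mul_left_cancel h)

end Heisenberg

/-- In the Heisenberg group `H` with generating set `S = {x, y}`, the element `x` lies in the
kernel of the natural action of `H` on every asymptotic cone, while its conjugacy class is
infinite; hence `FC(H) ⊊ ker(H ↷ Cone_ω(H, d_n))`. -/
theorem FC_ssubset_coneKernel_heisenberg :
    (∀ (ω : Ultrafilter ℕ), (∀ A ∈ ω, A.Infinite) →
      ∀ d : ℕ → ℝ, (∀ n, 0 < d n) → Monotone d → (∀ B : ℝ, ∃ n, B < d n) →
        inConeKernel {x, y} ω d x ∧
        {g : Heisenberg | Set.Finite {w | ∃ u : Heisenberg, u⁻¹ * g * u = w}} ⊂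
          {g : Heisenberg | inConeKernel {x, y} ω d g}) ∧
    Set.Infinite {w : Heisenberg | ∃ u : Heisenberg, u⁻¹ * x * u = w} := by
  refine ⟨fun ω hω d hd hmono hunb => ?_, Heisenberg.infinite_conj_x⟩
  have hdω : Tendsto d ω atTop :=
    (tendsto_atTop_atTop_of_monotone hmono fun b => (hunb b).imp fun _ => le_of_lt).mono_left
      (ω.le_atTop_of_forall_mem_infinite hω)
  have hx : inConeKernel {x, y} ω d x :=
    inConeKernel_of_wordLength_conj_le hd hdω 12 Heisenberg.wordLength_conj_x_le
  refine ⟨hx, (Set.ssubset_iff_of_subset fun g hg => inConeKernel_of_finite_conj hd hdω hg).2 ?_⟩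
  exact ⟨x, hx, Heisenberg.infinite_conj_x⟩
end

section
/- Let S be an infinite group containing a cyclic subgroup of finite index (an infinite virtually cyclic group), let h ∈ S be an element of infinite order, and let N be a subgroup of S. Then either N is finite, or there exist an element g ∈ N and nonzero integers a, b such that gᵃ = hᵇ. -/
lemma infinite_subgroup_of_finiteIndex {G : Type*} [Group G] [Infinite G]
    (H : Subgroup G) [H.FiniteIndex] : Infinite H := by
  by_contra hfin
  rw [not_infinite_iff_finite] at hfin
  have : Finite (G ⧸ H) := H.finite_quotient_of_finiteIndex
  have : Finite G := Finite.of_equiv ((G ⧸ H) × H) (Subgroup.groupEquivQuotientProdSubgroup (s := H)).symm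
  exact not_finite G

/-- In an infinite virtually cyclic group `S` with an element `h` of infinite order, every
subgroup `N` is either finite or contains an element `g` with `gᵃ = hᵇ` for some nonzero
integers `a, b`. -/
theorem finite_or_commensurable_of_virtually_cyclic
    {S : Type*} [Group S] [Infinite S]
    (C : Subgroup S) (hC : IsCyclic C) (hCfi : C.FiniteIndex)
    (h : S) (hh : ∀ n : ℕ, 1 ≤ n → h ^ n ≠ 1)
    (N : Subgroup S) :
    (N : Set S).Finite ∨
      ∃ g ∈ N, ∃ a b : ℤ, a ≠ 0 ∧ b ≠ 0 ∧ g ^ a = h ^ b := by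
  by_cases hN : (N : Set S).Finite
  · exact Or.inl hN
  right
  obtain ⟨c, hcgen⟩ := hC
  -- h ^ m ∈ C for some m > 0
  obtain ⟨m, hm0, -, hmem⟩ :=
    Subgroup.exists_pow_mem_of_index_ne_zero hCfi.index_ne_zero h
  obtain ⟨j, hj⟩ := hcgen ⟨h ^ m, hmem⟩
  have hj' : (c : S) ^ j = h ^ m := congrArg Subtype.val hj
  have hj0 : j ≠ 0 := by
    rintro rfl
    simp only [zpow_zero] at hj'
    exact hh m hm0 hj'.symm
  -- N is infinite, so C ⊓ N (as a subgroup of N) is infinite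
  haveI : Infinite N := Set.infinite_coe_iff.mpr hN
  haveI : (C.subgroupOf N).FiniteIndex := Subgroup.instFiniteIndex_subgroupOf C N
  haveI : Infinite (C.subgroupOf N) := infinite_subgroup_of_finiteIndex _
  obtain ⟨x, hx1⟩ := exists_ne (1 : C.subgroupOf N)
  have hxC : ((x : N) : S) ∈ C := x.2
  obtain ⟨k, hk⟩ := hcgen ⟨((x : N) : S), hxC⟩
  have hk' : (c : S) ^ k = ((x : N) : S) := congrArg Subtype.val hk
  have hk0 : k ≠ 0 := by
    rintro rfl
    simp only [zpow_zero] at hk'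
    apply hx1
    ext
    exact hk'.symm
  refine ⟨((x : N) : S), (x : N).2, j, (m : ℤ) * k, hj0, ?_, ?_⟩
  · exact mul_ne_zero (by exact_mod_cast hm0.ne') hk0
  · rw [← hk', ← zpow_mul, mul_comm, zpow_mul, hj', ← zpow_natCast h, ← zpow_mul]
end

section
/- Let G = ℤ² with generating set S = {e₁, e₂} where e₁ = (1,0), e₂ = (0,1), so that ‖(a,b)‖_S = |a| + |b|. For each n ∈ ℕ let φₙ : ℤ² → ℤ² be the automorphism (a,b) ↦ (a + nb, b). Then: (i) for each n, inf_{g ∈ ℤ²} max_{s ∈ S} ‖(−g) + φₙ(s) + g‖_S = max(‖φₙ(e₁)‖_S, ‖φₙ(e₂)‖_S) = n + 1, so the Paulin sequence is dₙ = n + 1; (ii) ‖φₙ(e₂)‖_S / dₙ = 1 for all n, so for every nonprincipal ultrafilter ω the sequence ‖φₙ(e₂)‖_S/dₙ does not converge to 0 along ω, and hence e₂ is not in the kernel of Paulin's twisted action of ℤ² on the asymptotic cone Cone_ω(ℤ², dₙ); (iii) on the other hand, every g ∈ ℤ² lies in the kernel of the natural action on Cone_ω(ℤ², dₙ), since ‖(−xₙ)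 + g + xₙ‖_S/dₙ = ‖g‖_S/dₙ → 0 for every sequence (xₙ). Thus the kernel of Paulin's construction differs from the kernel of the natural action for ℤ². -/
open Filter

/-- The word norm on `ℤ²` with respect to `S = {e₁, e₂}`: `‖(a,b)‖ = |a| + |b|`. -/
noncomputable def wordNorm (p : ℤ × ℤ) : ℝ := ((|p.1| + |p.2| : ℤ) : ℝ)

/-- The standard generators of `ℤ²`. -/
def e1 : ℤ × ℤ := (1, 0)

def e2 : ℤ × ℤ := (0, 1)

/-- The automorphism `φₙ : (a,b) ↦ (a + nb, b)` of `ℤ²`. -/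
def φ (n : ℕ) : (ℤ × ℤ) ≃+ (ℤ × ℤ) where
  toFun p := (p.1 + n * p.2, p.2)
  invFun p := (p.1 - n * p.2, p.2)
  left_inv p := by simp
  right_inv p := by simp
  map_add' p q := by simp; ring

/-- For `ℤ²` with the Paulin sequence `dₙ = n + 1` associated to the automorphisms
`φₙ : (a,b) ↦ (a + nb, b)`:
(i) `inf_g max_s ‖−g + φₙ(s) + g‖ = max(‖φₙ(e₁)‖, ‖φₙ(e₂)‖) = n + 1`;
(ii) `‖φₙ(e₂)‖ / dₙ = 1`, hence this sequence does not `ω`-converge to `0` and `e₂` is not in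
the kernel of Paulin's twisted action on `Cone_ω(ℤ², dₙ)`;
(iii) every `g ∈ ℤ²` lies in the kernel of the natural action.
Thus the two kernels differ for `ℤ²`. -/
theorem paulin_kernel_ne_natural_kernel_Z2
    (ω : Ultrafilter ℕ) (hω : ∀ A ∈ ω, A.Infinite) :
    (∀ n : ℕ,
      (⨅ g : ℤ × ℤ, max (wordNorm (-g + φ n e1 + g)) (wordNorm (-g + φ n e2 + g)))
          = max (wordNorm (φ n e1)) (wordNorm (φ n e2)) ∧
      max (wordNorm (φ n e1)) (wordNorm (φ n e2)) = (n : ℝ) + 1) ∧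
    (∀ n : ℕ, wordNorm (φ n e2) / ((n : ℝ) + 1) = 1) ∧
    ¬ Tendsto (fun n : ℕ => wordNorm (φ n e2) / ((n : ℝ) + 1)) (ω : Filter ℕ) (nhds 0) ∧
    ¬ (∀ x : ℕ → ℤ × ℤ, (∃ B : ℝ, ∀ n, wordNorm (x n) / ((n : ℝ) + 1) ≤ B) →
        Tendsto (fun n : ℕ => wordNorm (-(x n) + φ n e2 + x n) / ((n : ℝ) + 1))
          (ω : Filter ℕ) (nhds 0)) ∧
    (∀ g : ℤ × ℤ, ∀ x : ℕ → ℤ × ℤ,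
        Tendsto (fun n : ℕ => wordNorm (-(x n) + g + x n) / ((n : ℝ) + 1))
          (ω : Filter ℕ) (nhds 0)) := by

  have hconj : ∀ (g a : ℤ × ℤ), -g + a + g = a := by intro g a; abel
  have hn1 : ∀ n : ℕ, wordNorm (φ n e1) = 1 := by
    intro n; simp [wordNorm, φ, e1]
  have hn2 : ∀ n : ℕ, wordNorm (φ n e2) = (n : ℝ) + 1 := by
    intro n; simp [wordNorm, φ, e2]
  have hpos : ∀ n : ℕ, (0:ℝ) < (n : ℝ) + 1 := by
    intro n; positivity
  have hone : ∀ n : ℕ, wordNorm (φ n e2) / ((n : ℝ) + 1) = 1 := by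
    intro n; rw [hn2]; field_simp
  have hωtop : (ω : Filter ℕ) ≤ atTop := by
    rw [← Nat.cofinite_eq_atTop]
    intro A hA
    rw [mem_cofinite] at hA
    by_contra h
    exact (hω _ (Ultrafilter.compl_mem_iff_notMem.mpr h)) hA
  have hmax : ∀ n : ℕ, max (wordNorm (φ n e1)) (wordNorm (φ n e2)) = (n:ℝ) + 1 := by
    intro n
    rw [hn1, hn2]
    exact max_eq_right (by push_cast; linarith)
  refine ⟨fun n => ⟨?_, hmax n⟩, hone, ?_, ?_, ?_⟩
  · simp only [hconj]
    exact ciInf_const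
  · intro h
    have h1 : Tendsto (fun _ : ℕ => (1:ℝ)) (ω : Filter ℕ) (nhds 0) := by
      simpa [hone] using h
    have := tendsto_nhds_unique h1 tendsto_const_nhds
    norm_num at this
  · intro h
    have h0 := h (fun _ => 0) ⟨0, fun n => by simp [wordNorm]⟩
    simp only [neg_zero, add_zero, zero_add] at h0
    have h1 : Tendsto (fun _ : ℕ => (1:ℝ)) (ω : Filter ℕ) (nhds 0) := by
      simpa [hone] using h0
    have := tendsto_nhds_unique h1 tendsto_const_nhds
    norm_num at this
  · intro g x
    simp only [hconj]
    have : Tendsto (fun n : ℕ => wordNorm g / ((n : ℝ) + 1)) atTop (nhds 0) := by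
      apply Tendsto.div_atTop tendsto_const_nhds
      exact tendsto_atTop_add_const_right _ 1 tendsto_natCast_atTop_atTop
    exact this.mono_left hωtop
end
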